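/- Let r be odd, β ∈ M_N(o_r) regular, C = C_{GL_N(o_r)}(β), l' = (r−1)/2, l = l'+1. Suppose P_β is the (unique) p-Sylow subgroup of C and J ⊆ K^{l'} is a subgroup containing (C ∩ K^{l'})K^l with J normalized by P_β. Then the index [P_β K^{l'} : P_β J] equals [K^{l'} : J]; equivalently, P_β ∩ J = P_β ∩ K^{l'}. -/

import Mathlib

/-!
Since `P_β ≤ C`, the hypothesis on `J` gives `P_β ∩ K^{l'} ≤ J`, whence
`P_β ∩ J = P_β ∩ K^{l'}`. As `P_β` normalises `J`, `P_β J` is the set product, so Dedekind's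
rule gives `P_β J ∩ K^{l'} = (P_β ∩ K^{l'}) J = J`. With `K^{l'}` normal,
`P_β K^{l'} = (P_β J) K^{l'}` and the second isomorphism theorem gives
`[P_β K^{l'} : P_β J] = [K^{l'} : P_β J ∩ K^{l'}] = [K^{l'} : J]`.
-/

open IsLocalRing

/-- The principal congruence subgroup `1 + J^i · M_N(R)` inside `GL_N(R)`,
for an ideal `J` of a commutative ring `R`. -/
def congrSubgroup (N : ℕ) (R : Type) [CommRing R] (J : Ideal R) (i : ℕ) :
    Subgroup (GL (Fin N) R) where
  carrier := {u | ∀ a b, ((u : Matrix (Fin N) (Fin N) R) - 1) a b ∈ J ^ i}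
  one_mem' := by intro a b; simp
  mul_mem' := by
    intro u v hu hv a b
    have h : ((↑(u * v) : Matrix (Fin N) (Fin N) R) - 1)
        = ((↑u : Matrix (Fin N) (Fin N) R) - 1) * ((↑v : Matrix (Fin N) (Fin N) R) - 1)
          + (((↑u : Matrix (Fin N) (Fin N) R) - 1) + ((↑v : Matrix (Fin N) (Fin N) R) - 1)) := by
      rw [Units.val_mul]; noncomm_ring
    rw [h, Matrix.add_apply, Matrix.add_apply]
    refine Ideal.add_mem _ ?_ (Ideal.add_mem _ (hu a b) (hv a b))
    rw [Matrix.mul_apply]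
    exact Ideal.sum_mem _ fun c _ => Ideal.mul_mem_left _ _ (hv c b)
  inv_mem' := by
    intro u hu a b
    have h : ((↑u⁻¹ : Matrix (Fin N) (Fin N) R) - 1)
        = -((↑u⁻¹ : Matrix (Fin N) (Fin N) R) * ((↑u : Matrix (Fin N) (Fin N) R) - 1)) := by
      have huu : (↑u⁻¹ : Matrix (Fin N) (Fin N) R) * (↑u : Matrix (Fin N) (Fin N) R) = 1 := by
        rw [← Units.val_mul, inv_mul_cancel, Units.val_one]
      noncomm_ring [huu]
    rw [h, Matrix.neg_apply, Matrix.mul_apply]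
    exact neg_mem (Ideal.sum_mem _ fun c _ => Ideal.mul_mem_left _ _ (hu c b))

/-- Reduction mod the maximal ideal, `𝔬/𝔭^r → 𝔬/𝔭`. -/
noncomputable def resRed (o : Type) [CommRing o] [IsLocalRing o] (r : ℕ) (hr : r ≠ 0) :
    (o ⧸ (maximalIdeal o) ^ r) →+* ResidueField o :=
  Ideal.Quotient.lift _ (IsLocalRing.residue o) fun a ha =>
    Ideal.Quotient.eq_zero_iff_mem.mpr (Ideal.pow_le_self hr ha)

lemma congrSubgroup_normal (N : ℕ) (R : Type) [CommRing R] (J : Ideal R) (i : ℕ) :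
    (congrSubgroup N R J i).Normal := by
  constructor
  intro u hu g a b
  have hconj : ((↑(g * u * g⁻¹) : Matrix (Fin N) (Fin N) R) - 1)
      = (↑g : Matrix (Fin N) (Fin N) R) * ((↑u : Matrix (Fin N) (Fin N) R) - 1)
        * (↑g⁻¹ : Matrix (Fin N) (Fin N) R) := by
    have hgg : (↑g : Matrix (Fin N) (Fin N) R) * (↑g⁻¹ : Matrix (Fin N) (Fin N) R) = 1 := by
      rw [← Units.val_mul, mul_inv_cancel, Units.val_one]
    simp only [Units.val_mul]
    noncomm_ring [hgg]
  rw [hconj, Matrix.mul_apply]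
  refine Ideal.sum_mem _ fun c _ => Ideal.mul_mem_right _ _ ?_
  rw [Matrix.mul_apply]
  exact Ideal.sum_mem _ fun d _ => Ideal.mul_mem_left _ _ (hu d c)

namespace Subgroup

open scoped Pointwise

variable {G : Type*} [Group G]

lemma le_normalizer_of_forall_conj_mem {H J : Subgroup G}
    (hH : ∀ g ∈ H, ∀ u ∈ J, g * u * g⁻¹ ∈ J) : H ≤ normalizer (J : Set G) := by
  intro g hg
  rw [mem_normalizer_iff]
  refine fun u => ⟨hH g hg u, fun hu => ?_⟩
  simpa [mul_assoc] using hH g⁻¹ (inv_mem hg) _ hu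

lemma sup_inf_eq_of_le_normalizer {H J K : Subgroup G} (hJK : J ≤ K)
    (hH : H ≤ normalizer (J : Set G)) (hHK : H ⊓ K ≤ J) : (H ⊔ J) ⊓ K = J := by
  refine le_antisymm ?_ (le_inf le_sup_right hJK)
  rintro x ⟨hxHJ, hxK⟩
  obtain ⟨h, hh, j, hj, rfl⟩ : x ∈ (H : Set G) * (J : Set G) := by
    rwa [← coe_mul_of_left_le_normalizer_right H J hH]
  have hjK : j⁻¹ ∈ K := inv_mem (hJK hj)
  have hhK : h ∈ K := by simpa using mul_mem hxK hjK
  exact mul_mem (hHK ⟨hh, hhK⟩) hj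

lemma relIndex_sup_eq_relIndex_of_normal (M K : Subgroup G) [K.Normal] :
    M.relIndex (M ⊔ K) = M.relIndex K := by
  symm
  refine Nat.card_congr (Equiv.ofBijective (quotientSubgroupOfEmbeddingOfLE M le_sup_right)
    ⟨(quotientSubgroupOfEmbeddingOfLE M le_sup_right).injective, ?_⟩)
  rintro ⟨⟨x, hx⟩⟩
  obtain ⟨k, hk, m, hm, rfl⟩ := mem_sup_of_normal_left.mp ((sup_comm M K).le hx)
  refine ⟨QuotientGroup.mk ⟨k, hk⟩, ?_⟩
  rw [quotientSubgroupOfEmbeddingOfLE_apply_mk]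
  exact QuotientGroup.eq.mpr (by simpa [mem_subgroupOf] using hm)

lemma relIndex_sup_sup_of_le_normalizer {H J K : Subgroup G} [K.Normal] (hJK : J ≤ K)
    (hH : H ≤ normalizer (J : Set G)) (hHK : H ⊓ K ≤ J) :
    (H ⊔ J).relIndex (H ⊔ K) = J.relIndex K :=
  calc (H ⊔ J).relIndex (H ⊔ K) = (H ⊔ J).relIndex (H ⊔ J ⊔ K) := by
        rw [sup_assoc, sup_of_le_right hJK]
    _ = ((H ⊔ J) ⊓ K).relIndex K := by
        rw [relIndex_sup_eq_relIndex_of_normal, inf_relIndex_right]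
    _ = J.relIndex K := by rw [sup_inf_eq_of_le_normalizer hJK hH hHK]

end Subgroup

theorem index_PbetaJ_eq
    (o : Type) [CommRing o] [IsDomain o] [IsDiscreteValuationRing o]
    (N r : ℕ)
    (l l' : ℕ)
    (C : Subgroup (GL (Fin N) (o ⧸ (maximalIdeal o) ^ r)))
    (Pβ : Subgroup (GL (Fin N) (o ⧸ (maximalIdeal o) ^ r)))
    (hPβC : Pβ ≤ C)
    (J : Subgroup (GL (Fin N) (o ⧸ (maximalIdeal o) ^ r)))
    (hJup : J ≤ congrSubgroup N _
      ((maximalIdeal o).map (Ideal.Quotient.mk ((maximalIdeal o) ^ r))) l')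
    (hJdown : (C ⊓ congrSubgroup N _
        ((maximalIdeal o).map (Ideal.Quotient.mk ((maximalIdeal o) ^ r))) l') ⊔
      congrSubgroup N _
        ((maximalIdeal o).map (Ideal.Quotient.mk ((maximalIdeal o) ^ r))) l ≤ J)
    (hJnorm : ∀ g ∈ Pβ, ∀ u ∈ J, g * u * g⁻¹ ∈ J) :
    (Pβ ⊔ J).relIndex
        (Pβ ⊔ congrSubgroup N _
          ((maximalIdeal o).map (Ideal.Quotient.mk ((maximalIdeal o) ^ r))) l')
      = J.relIndex (congrSubgroup N _
          ((maximalIdeal o).map (Ideal.Quotient.mk ((maximalIdeal o) ^ r))) l') ∧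
    Pβ ⊓ J = Pβ ⊓ congrSubgroup N _
      ((maximalIdeal o).map (Ideal.Quotient.mk ((maximalIdeal o) ^ r))) l' := by
  set K := congrSubgroup N _ ((maximalIdeal o).map (Ideal.Quotient.mk ((maximalIdeal o) ^ r))) l'
  have : K.Normal := congrSubgroup_normal ..
  have hPK : Pβ ⊓ K ≤ J := (inf_le_inf_right K hPβC).trans (le_sup_left.trans hJdown)
  exact ⟨Subgroup.relIndex_sup_sup_of_le_normalizer hJup
      (Subgroup.le_normalizer_of_forall_conj_mem hJnorm) hPK,
    le_antisymm (inf_le_inf_left Pβ hJup) (le_inf inf_le_left hPK)⟩
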